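/- arXiv:2603.15059 — 2 statements merged into one kernel-verified Lean document; each statement's English description precedes it below -/
import Mathlib

section
/- Example satisfying the heavy-tailed noise assumption: let f_i : ℝ^{m×n} → ℝ (i = 1,…,N) be differentiable with each f_i L_i-Hölder smooth with exponent ν ∈ (0,1] and L_i < 2L_i^ν, and suppose f_i^⋆ := inf f_i ∈ ℝ and f_i^{⋆⋆} := sup f_i ∈ ℝ for each i. Let f(W) = (1/N) Σ_{i=1}^N f_i(W), let ξ be uniformly distributed on {1,…,N}, and let 𝔭 ∈ (1,2]. Then for every W ∈ ℝ^{m×n}: (i) E_ξ[∇f_ξ(W)] = ∇f(W), and (ii) E_ξ[‖∇f_ξ(W) − ∇f(W)‖_F^𝔭] ≤ [ (1/N) Σ_{i=1}^N ( 2L_i^{1+ν}(f_i^{⋆⋆} − f_i^⋆)/(2L_i^ν − L_i) + (1−ν)L_i/((1+ν)(2L_i^ν − L_i)) ) ]^{𝔭/2}. -/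
/-!
Hölder continuity of `∇g` with exponent `ν` gives the descent inequality
`g y ≤ g x + ⟪∇g x, y - x⟫ + L‖y - x‖^(1+ν)/(1+ν)`. At the gradient step `y = x - L⁻¹ ∇g x`,
squeezing `g` between its infimum and supremum and bounding `‖∇g x‖^(1+ν)` by Young's inequality
bounds `‖∇g x‖²` uniformly; `L < 2L^ν` is exactly what keeps the coefficient of `‖∇g x‖²` positive.
Under the uniform distribution the mean of the `∇fᵢ` is `∇f`, their variance is at most their
second moment, and the `𝔭`-th moment is at most the `𝔭/2`-th power of the second moment by the
power-mean inequality.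
-/

open MeasureTheory
open scoped InnerProductSpace BigOperators

theorem rpow_one_add_le_mul_sq_add {s ν : ℝ} (hs : 0 ≤ s) (hν0 : 0 ≤ ν) (hν1 : ν ≤ 1) :
    s ^ (1 + ν) ≤ (1 + ν) / 2 * s ^ 2 + (1 - ν) / 2 := by
  have h := Real.geom_mean_le_arith_mean2_weighted (w₁ := (1 + ν) / 2) (w₂ := (1 - ν) / 2)
    (by linarith) (by linarith) (sq_nonneg s) zero_le_one (by ring)
  rw [Real.one_rpow, mul_one, mul_one, ← Real.rpow_two, ← Real.rpow_mul hs,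
    mul_div_cancel₀ _ two_ne_zero, Real.rpow_two] at h
  linarith

section HolderGradient

variable {E : Type*} [NormedAddCommGroup E] [InnerProductSpace ℝ E] [CompleteSpace E]
  {g : E → ℝ} {L ν : ℝ}

theorem hasDerivAt_comp_add_smul (hg : Differentiable ℝ g) (x v : E) (t : ℝ) :
    HasDerivAt (fun t : ℝ => g (x + t • v)) ⟪gradient g (x + t • v), v⟫_ℝ t := by
  have hline : HasDerivAt (fun t : ℝ => x + t • v) v t := by
    simpa using ((hasDerivAt_id t).smul_const v).const_add x
  simpa [Function.comp_def] using
    (hg (x + t • v)).hasGradientAt.hasFDerivAt.comp_hasDerivAt t hline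

theorem le_add_inner_gradient_add_rpow_of_holder (hν : 0 ≤ ν) (hg : Differentiable ℝ g)
    (hH : ∀ a b : E, ‖gradient g a - gradient g b‖ ≤ L * ‖a - b‖ ^ ν) (x y : E) :
    g y ≤ g x + ⟪gradient g x, y - x⟫_ℝ + L * ‖y - x‖ ^ (1 + ν) / (1 + ν) := by
  set v := y - x
  set c := L * ‖v‖ ^ (1 + ν) / (1 + ν)
  -- `φ' t = ⟪∇g (x + t • v) - ∇g x, v⟫ - L t^ν ‖v‖^(1+ν) ≤ 0` for `t > 0`, so `φ 1 ≤ φ 0`.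
  let φ : ℝ → ℝ := fun t => g (x + t • v) - t * ⟪gradient g x, v⟫_ℝ - c * t ^ (1 + ν)
  have hφ : ∀ t, HasDerivAt φ
      (⟪gradient g (x + t • v), v⟫_ℝ - ⟪gradient g x, v⟫_ℝ - c * ((1 + ν) * t ^ ν)) t := by
    intro t
    have hpow := Real.hasDerivAt_rpow_const (x := t) (p := 1 + ν) (Or.inr (by linarith))
    rw [add_sub_cancel_left] at hpow
    exact ((hasDerivAt_comp_add_smul hg x v t).fun_sub
      (hasDerivAt_mul_const _)).fun_sub (hpow.const_mul c)
  have hanti : AntitoneOn φ (Set.Ici 0) := by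
    refine antitoneOn_of_hasDerivWithinAt_nonpos (convex_Ici 0)
      (fun t _ => (hφ t).continuousAt.continuousWithinAt)
      (fun t _ => (hφ t).hasDerivWithinAt) ?_
    rw [interior_Ici]
    intro t (ht : 0 < t)
    have hc : c * ((1 + ν) * t ^ ν) = L * (t ^ ν * ‖v‖ ^ ν) * ‖v‖ := by
      simp only [c]
      rw [Real.rpow_add' (norm_nonneg v) (by linarith), Real.rpow_one]
      field_simp
    calc ⟪gradient g (x + t • v), v⟫_ℝ - ⟪gradient g x, v⟫_ℝ - c * ((1 + ν) * t ^ ν)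
        = ⟪gradient g (x + t • v) - gradient g x, v⟫_ℝ - L * ‖x + t • v - x‖ ^ ν * ‖v‖ := by
          rw [inner_sub_left, hc, add_sub_cancel_left, norm_smul, Real.norm_of_nonneg ht.le,
            Real.mul_rpow ht.le (norm_nonneg v)]
      _ ≤ 0 := by
          rw [sub_nonpos]
          exact (real_inner_le_norm _ _).trans
            (mul_le_mul_of_nonneg_right (hH _ _) (norm_nonneg v))
  have h01 := hanti Set.self_mem_Ici (Set.mem_Ici.2 zero_le_one) zero_le_one
  simp only [φ, c, v, zero_smul, add_zero, zero_mul, sub_zero, one_smul, one_mul, Real.one_rpow,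
    mul_one, Real.zero_rpow (by linarith : (1 + ν) ≠ 0), mul_zero, add_sub_cancel] at h01 ⊢
  linarith

theorem sq_norm_gradient_le_of_holder (hL : 0 < L) (hν0 : 0 ≤ ν) (hν1 : ν ≤ 1)
    (hL2 : L < 2 * L ^ ν) (hg : Differentiable ℝ g)
    (hH : ∀ a b : E, ‖gradient g a - gradient g b‖ ≤ L * ‖a - b‖ ^ ν)
    {m M : ℝ} (hm : m ∈ lowerBounds (Set.range g)) (hM : M ∈ upperBounds (Set.range g)) (x : E) :
    ‖gradient g x‖ ^ 2 ≤ 2 * L ^ (1 + ν) * (M - m) / (2 * L ^ ν - L) +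
      (1 - ν) * L / ((1 + ν) * (2 * L ^ ν - L)) := by
  set G := gradient g x
  set A := L ^ ν with hA
  have hA0 : 0 < A := Real.rpow_pos_of_pos hL ν
  have hgap : 0 < (1 + ν) * (2 * A - L) := mul_pos (by linarith) (by linarith)
  have hstep : g (x - L⁻¹ • G) ≤ g x - ‖G‖ ^ 2 / L + ‖G‖ ^ (1 + ν) / (A * (1 + ν)) := by
    have hnorm : ‖x - L⁻¹ • G - x‖ = L⁻¹ * ‖G‖ := by
      rw [sub_sub_cancel_left, norm_neg, norm_smul, Real.norm_of_nonneg (inv_nonneg.2 hL.le)]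
    have hinner : ⟪G, x - L⁻¹ • G - x⟫_ℝ = -(‖G‖ ^ 2 / L) := by
      rw [sub_sub_cancel_left, inner_neg_right, real_inner_smul_right,
        real_inner_self_eq_norm_sq, inv_mul_eq_div]
    have hcoef : L * (L⁻¹ * ‖G‖) ^ (1 + ν) = ‖G‖ ^ (1 + ν) / A := by
      rw [Real.mul_rpow (inv_nonneg.2 hL.le) (norm_nonneg G), Real.inv_rpow hL.le,
        Real.rpow_add hL, Real.rpow_one, ← hA]
      field_simp
    have := le_add_inner_gradient_add_rpow_of_holder hν0 hg hH x (x - L⁻¹ • G)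
    rw [hinner, hnorm, hcoef, div_div] at this
    linarith
  have hbound : ‖G‖ ^ 2 / L ≤ M - m + ((1 + ν) / 2 * ‖G‖ ^ 2 + (1 - ν) / 2) / (A * (1 + ν)) := by
    have := div_le_div_of_nonneg_right (rpow_one_add_le_mul_sq_add (norm_nonneg G) hν0 hν1)
      (by positivity : 0 ≤ A * (1 + ν))
    linarith [hm ⟨x - L⁻¹ • G, rfl⟩, hM ⟨x, rfl⟩]
  have hcleared : ‖G‖ ^ 2 * ((1 + ν) * (2 * A - L)) ≤ L * (2 * A * (1 + ν) * (M - m) + (1 - ν)) := by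
    have := mul_le_mul_of_nonneg_left hbound (by positivity : 0 ≤ 2 * A * L * (1 + ν))
    have e1 : 2 * A * L * (1 + ν) * (‖G‖ ^ 2 / L) = 2 * A * (1 + ν) * ‖G‖ ^ 2 := by
      field_simp
    have e2 : 2 * A * L * (1 + ν) * (M - m + ((1 + ν) / 2 * ‖G‖ ^ 2 + (1 - ν) / 2) / (A * (1 + ν)))
        = 2 * A * L * (1 + ν) * (M - m) + L * ((1 + ν) * ‖G‖ ^ 2 + (1 - ν)) := by
      field_simp
    rw [e1, e2] at this
    linarith
  have hrhs : 2 * L ^ (1 + ν) * (M - m) / (2 * A - L) + (1 - ν) * L / ((1 + ν) * (2 * A - L))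
      = L * (2 * A * (1 + ν) * (M - m) + (1 - ν)) / ((1 + ν) * (2 * A - L)) := by
    rw [Real.rpow_add hL, Real.rpow_one, ← hA]
    field_simp
  rw [hrhs, le_div_iff₀ hgap]
  exact hcleared

end HolderGradient

theorem hasGradientAt_const_mul_sum {F ι : Type*} [NormedAddCommGroup F] [InnerProductSpace ℝ F]
    [CompleteSpace F] (s : Finset ι) {f : ι → F → ℝ} {x : F} (c : ℝ)
    (hf : ∀ i ∈ s, DifferentiableAt ℝ (f i) x) :
    HasGradientAt (fun y => c * ∑ i ∈ s, f i y) (c • ∑ i ∈ s, gradient (f i) x) x := by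
  rw [hasGradientAt_iff_hasFDerivAt, map_smul, map_sum]
  simp only [toDual_gradient]
  exact (HasFDerivAt.fun_sum fun i hi => (hf i hi).hasFDerivAt).const_mul c

theorem integral_uniformOfFintype {ι F : Type*} [Fintype ι] [Nonempty ι] [MeasurableSpace ι]
    [MeasurableSingletonClass ι] [NormedAddCommGroup F] [NormedSpace ℝ F] [CompleteSpace F]
    (X : ι → F) :
    ∫ i, X i ∂(PMF.uniformOfFintype ι).toMeasure = (Fintype.card ι : ℝ)⁻¹ • ∑ i, X i := by
  simp [PMF.integral_eq_sum, Finset.smul_sum]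

section WeightedMean

variable {ι : Type*} (s : Finset ι) {w : ι → ℝ}

theorem sum_mul_norm_sub_sum_smul_sq_le {F : Type*} [NormedAddCommGroup F]
    [InnerProductSpace ℝ F] (hw : ∑ i ∈ s, w i = 1) (x : ι → F) :
    ∑ i ∈ s, w i * ‖x i - ∑ j ∈ s, w j • x j‖ ^ 2 ≤ ∑ i ∈ s, w i * ‖x i‖ ^ 2 := by
  set mean := ∑ j ∈ s, w j • x j with hmean
  have hcross : ∑ i ∈ s, w i * ⟪x i, mean⟫_ℝ = ‖mean‖ ^ 2 := by
    rw [← real_inner_self_eq_norm_sq, hmean, sum_inner]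
    simp_rw [real_inner_smul_left]
  have hvar : ∑ i ∈ s, w i * ‖x i - mean‖ ^ 2 = ∑ i ∈ s, w i * ‖x i‖ ^ 2 - ‖mean‖ ^ 2 := by
    simp_rw [norm_sub_sq_real, mul_add, mul_sub, Finset.sum_add_distrib, Finset.sum_sub_distrib,
      ← Finset.sum_mul, hw, mul_left_comm _ (2 : ℝ), ← Finset.mul_sum, hcross]
    ring
  rw [hvar]
  linarith [sq_nonneg ‖mean‖]

theorem sum_mul_rpow_le_rpow_sum_mul_sq (hw₀ : ∀ i ∈ s, 0 ≤ w i) (hw : ∑ i ∈ s, w i = 1)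
    {a : ι → ℝ} (ha : ∀ i ∈ s, 0 ≤ a i) {p : ℝ} (hp₀ : 0 < p) (hp₂ : p ≤ 2) :
    ∑ i ∈ s, w i * a i ^ p ≤ (∑ i ∈ s, w i * a i ^ 2) ^ (p / 2) := by
  have h := Real.arith_mean_le_rpow_mean s w (fun i => a i ^ p) hw₀ hw
    (fun i hi => Real.rpow_nonneg (ha i hi) p) (p := 2 / p) (by rw [le_div_iff₀ hp₀]; linarith)
  have hpow : ∀ i ∈ s, (a i ^ p) ^ (2 / p) = a i ^ 2 := fun i hi => by
    rw [← Real.rpow_mul (ha i hi), mul_div_cancel₀ _ hp₀.ne', Real.rpow_two]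
  have hsq : ∑ i ∈ s, w i * (a i ^ p) ^ (2 / p) = ∑ i ∈ s, w i * a i ^ 2 :=
    Finset.sum_congr rfl fun i hi => by rw [hpow i hi]
  rwa [hsq, one_div_div] at h

end WeightedMean

/-- **Example satisfying the heavy-tailed noise assumption.** For `f_i` differentiable,
`L_i`-Hölder smooth with exponent `ν ∈ (0,1]`, `L_i < 2L_i^ν`, with finite infimum `f_i⋆` and
supremum `f_i⋆⋆`, empirical risk `f(W) = (1/N)∑ f_i(W)`, and `ξ` uniformly distributed on
`{1,…,N}`: (i) `E_ξ[∇f_ξ(W)] = ∇f(W)`, and (ii) the `𝔭`-variance bound holds. -/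
theorem uniform_stochastic_gradient_unbiased_and_pvariance_bound
    {m n N : ℕ} [NeZero N]
    (fi : Fin N → EuclideanSpace ℝ (Fin m × Fin n) → ℝ)
    (Li : Fin N → ℝ) (ν 𝔭 : ℝ)
    (hLi : ∀ i, 0 < Li i)
    (hν : ν ∈ Set.Ioc (0 : ℝ) 1) (h𝔭 : 𝔭 ∈ Set.Ioc (1 : ℝ) 2)
    (hLi2 : ∀ i, Li i < 2 * Li i ^ ν)
    (hdiff : ∀ i, Differentiable ℝ (fi i))
    (hholder : ∀ i, ∀ W₁ W₂ : EuclideanSpace ℝ (Fin m × Fin n),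
      ‖gradient (fi i) W₁ - gradient (fi i) W₂‖ ≤ Li i * ‖W₁ - W₂‖ ^ ν)
    (fStar fStarStar : Fin N → ℝ)
    (hinf : ∀ i, IsGLB (Set.range (fi i)) (fStar i))
    (hsup : ∀ i, IsLUB (Set.range (fi i)) (fStarStar i))
    (f : EuclideanSpace ℝ (Fin m × Fin n) → ℝ)
    (hf : ∀ W, f W = (N : ℝ)⁻¹ * ∑ i, fi i W) :
    ∀ W : EuclideanSpace ℝ (Fin m × Fin n),
      (∫ i, gradient (fi i) W ∂((PMF.uniformOfFintype (Fin N)).toMeasure)) = gradient f W ∧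
      (∫ i, ‖gradient (fi i) W - gradient f W‖ ^ 𝔭
          ∂((PMF.uniformOfFintype (Fin N)).toMeasure)) ≤
        ((N : ℝ)⁻¹ * ∑ i,
          (2 * Li i ^ (1 + ν) * (fStarStar i - fStar i) / (2 * Li i ^ ν - Li i) +
            (1 - ν) * Li i / ((1 + ν) * (2 * Li i ^ ν - Li i)))) ^ (𝔭 / 2) := by
  intro W
  have hgrad : gradient f W = (N : ℝ)⁻¹ • ∑ i, gradient (fi i) W := by
    rw [funext hf]
    exact (hasGradientAt_const_mul_sum _ _ fun i _ => (hdiff i).differentiableAt).gradient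
  have hw : ∑ _i : Fin N, (N : ℝ)⁻¹ = 1 := by simp
  simp only [integral_uniformOfFintype, Fintype.card_fin, smul_eq_mul, Finset.mul_sum]
  refine ⟨hgrad.symm, ?_⟩
  have hp : 0 ≤ 𝔭 / 2 := by linarith [h𝔭.1]
  calc ∑ i, (N : ℝ)⁻¹ * ‖gradient (fi i) W - gradient f W‖ ^ 𝔭
      ≤ (∑ i, (N : ℝ)⁻¹ * ‖gradient (fi i) W - gradient f W‖ ^ 2) ^ (𝔭 / 2) :=
        sum_mul_rpow_le_rpow_sum_mul_sq _ (fun _ _ => by positivity) hw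
          (fun _ _ => norm_nonneg _) (by linarith [h𝔭.1]) h𝔭.2
    _ ≤ (∑ i, (N : ℝ)⁻¹ * ‖gradient (fi i) W‖ ^ 2) ^ (𝔭 / 2) := by
        refine Real.rpow_le_rpow (by positivity) ?_ hp
        rw [hgrad, Finset.smul_sum]
        exact sum_mul_norm_sub_sum_smul_sq_le _ hw _
    _ ≤ _ := by
        refine Real.rpow_le_rpow (by positivity) (Finset.sum_le_sum fun i _ => ?_) hp
        exact mul_le_mul_of_nonneg_left (sq_norm_gradient_le_of_holder (hLi i) hν.1.le hν.2
          (hLi2 i) (hdiff i) (hholder i) (hinf i).1 (hsup i).1 W) (by positivity)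
end

section
/- Lower convergence bound for Muon with momentum: let (W_t) be generated by Muon with momentum β ∈ [0,1) under Assumptions (A1) and (A2). Suppose there exists t₂ ∈ ℕ such that for all t ≥ t₂ the convexity inequality f(W_{t+1}) ≥ f(W_t) + ∇f(W_t) • (W_{t+1} − W_t) holds almost surely (Assumption (A3)), and that C₆ := (1/√n) inf{E[f(W_{t₂})] − E[f(W_t)] : t ≥ t₂} ≥ 0 (Assumption (A4)). Then for all T ∈ ℕ: (1/Σ_{t=t₂}^{T+t₂−1} η_t) Σ_{t=t₂}^{T+t₂−1} η_t E[‖∇f(W_t)‖_F] ≥ C₆ / Σ_{t=t₂}^{T+t₂−1} η_t. -/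
open MeasureTheory ProbabilityTheory Real Filter Matrix
open scoped InnerProductSpace BigOperators

/-- The `m × n` matrix corresponding to an element of `EuclideanSpace ℝ (Fin m × Fin n)`
(so that the Euclidean norm is the Frobenius norm). -/
noncomputable def toMat {m n : ℕ} (W : EuclideanSpace ℝ (Fin m × Fin n)) :
    Matrix (Fin m) (Fin n) ℝ := Matrix.of fun i j => W (i, j)

/-- Membership in the Stiefel manifold `St(n,m) = {O ∈ ℝ^{m×n} : Oᵀ O = I_n}`. -/
def IsStiefel {m n : ℕ} (A : EuclideanSpace ℝ (Fin m × Fin n)) : Prop :=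
  (toMat A)ᵀ * toMat A = 1

/-! Proof idea: under (A3) one Muon step decreases `f` by at most
`-η_t ⟪∇f(W_t), O_t⟫ ≤ η_t ‖∇f(W_t)‖_F ‖O_t‖_F = √n η_t ‖∇f(W_t)‖_F`, since `O_t` lies on the
Stiefel manifold. Taking expectations and telescoping from `t₂` to `T + t₂` bounds
`E[f(W_{t₂})] − E[f(W_{T+t₂})] ≥ √n C₆` by `√n Σ η_t E‖∇f(W_t)‖_F`. -/

/-- The squared Frobenius norm of `A` is `Tr(Aᵀ A) = Tr(I_n) = n`. -/
lemma IsStiefel.norm_eq_sqrt {m n : ℕ} {A : EuclideanSpace ℝ (Fin m × Fin n)}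
    (h : IsStiefel A) : ‖A‖ = √n := by
  have htrace : ((toMat A)ᵀ * toMat A).trace = n := by
    rw [h, trace_one, Fintype.card_fin]
  rw [EuclideanSpace.norm_eq, ← htrace]
  simp only [trace, diag, mul_apply, transpose_apply]
  rw [Fintype.sum_prod_type, Finset.sum_comm]
  simp [toMat, sq]

lemma sub_le_norm_mul_of_le_add_inner {E : Type*} [NormedAddCommGroup E]
    [InnerProductSpace ℝ E] {f : E → ℝ} {G W O : E} {η : ℝ} (hη : 0 ≤ η)
    (h : f W + ⟪G, (W - η • O) - W⟫_ℝ ≤ f (W - η • O)) :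
    f W - f (W - η • O) ≤ ‖O‖ * (η * ‖G‖) := by
  have hinner : ⟪G, (W - η • O) - W⟫_ℝ = -(η * ⟪G, O⟫_ℝ) := by
    rw [sub_sub_cancel_left, inner_neg_right, real_inner_smul_right]
  have hcs : η * ⟪G, O⟫_ℝ ≤ η * (‖G‖ * ‖O‖) :=
    mul_le_mul_of_nonneg_left (real_inner_le_norm G O) hη
  linarith

lemma Finset.sub_le_sum_Ico_of_sub_succ_le {α : Type*} [AddCommGroup α] [PartialOrder α]
    [IsOrderedAddMonoid α] {a d : ℕ → α} {m n : ℕ} (hmn : m ≤ n)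
    (h : ∀ i ∈ Finset.Ico m n, a i - a (i + 1) ≤ d i) :
    a m - a n ≤ ∑ i ∈ Finset.Ico m n, d i := by
  calc a m - a n = ∑ i ∈ Finset.Ico m n, (-a (i + 1) - -a i) := by
        rw [Finset.sum_Ico_sub (fun i => -a i) hmn, neg_sub_neg]
    _ ≤ ∑ i ∈ Finset.Ico m n, d i :=
        Finset.sum_le_sum fun i hi => by rw [neg_sub_neg]; exact h i hi

lemma integral_sub_le_of_ae_sub_le {Ω : Type*} {mΩ : MeasurableSpace Ω} {μ : Measure Ω}
    {X Y Z : Ω → ℝ} (hX : Integrable X μ) (hY : Integrable Y μ) (hZ : Integrable Z μ)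
    (h : ∀ᵐ ω ∂μ, X ω - Y ω ≤ Z ω) :
    ∫ ω, X ω ∂μ - ∫ ω, Y ω ∂μ ≤ ∫ ω, Z ω ∂μ := by
  rw [← integral_sub hX hY]
  exact integral_mono_ae (hX.sub hY) hZ h

lemma inv_mul_mul_le_self {α : Type*} [GroupWithZero α] [Preorder α] {a b : α}
    (hb : 0 ≤ b) : a⁻¹ * (a * b) ≤ b := by
  rcases eq_or_ne a 0 with rfl | ha
  · simpa using hb
  · rw [inv_mul_cancel_left₀ ha]

theorem muon_momentum_lower_convergence_bound_general
    {m n : ℕ}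
    {Ω : Type*} {mΩ : MeasurableSpace Ω} (μ : Measure Ω)
    -- empirical risk
    (f : EuclideanSpace ℝ (Fin m × Fin n) → ℝ)
    (η : ℕ → ℝ) (hη : ∀ t, 0 < η t)
    (W M O : ℕ → Ω → EuclideanSpace ℝ (Fin m × Fin n))
    -- O t is a minimizer of ‖O − M_t‖_F over the Stiefel manifold
    (hOmin : ∀ t ω, IsStiefel (O t ω) ∧
      ∀ A : EuclideanSpace ℝ (Fin m × Fin n), IsStiefel A → ‖O t ω - M t ω‖ ≤ ‖A - M t ω‖)
    (hupdate : ∀ t ω, W (t + 1) ω = W t ω - η t • O t ω)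
    (hfint : ∀ t, Integrable (fun ω => f (W t ω)) μ)
    (hgradnint : ∀ t, Integrable (fun ω => ‖gradient f (W t ω)‖) μ)
    -- (A3): convexity along the iterates after time t₂
    (t₂ : ℕ)
    (hA3 : ∀ t, t₂ ≤ t → ∀ᵐ ω ∂μ,
      f (W t ω) + ⟪gradient f (W t ω), W (t + 1) ω - W t ω⟫_ℝ ≤ f (W (t + 1) ω))
    -- (A4): C₆ ≥ 0 is a lower bound of (1/√n)(E[f(W_{t₂})] − E[f(W_t)]) for t ≥ t₂
    (C₆ : ℝ)
    (hC₆ : ∀ t, t₂ ≤ t →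
      C₆ ≤ (Real.sqrt n)⁻¹ * ((∫ ω, f (W t₂ ω) ∂μ) - ∫ ω, f (W t ω) ∂μ)) :
    ∀ T : ℕ,
      C₆ / (∑ t ∈ Finset.Ico t₂ (T + t₂), η t) ≤
        (∑ t ∈ Finset.Ico t₂ (T + t₂), η t)⁻¹ *
          ∑ t ∈ Finset.Ico t₂ (T + t₂), η t * (∫ ω, ‖gradient f (W t ω)‖ ∂μ) := by
  intro T
  have hdescent : ∀ t ∈ Finset.Ico t₂ (T + t₂),
      ∫ ω, f (W t ω) ∂μ - ∫ ω, f (W (t + 1) ω) ∂μ ≤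
        √n * (η t * ∫ ω, ‖gradient f (W t ω)‖ ∂μ) := by
    intro t ht
    rw [← integral_const_mul, ← integral_const_mul]
    refine integral_sub_le_of_ae_sub_le (hfint t) (hfint (t + 1))
      (((hgradnint t).const_mul _).const_mul _) ?_
    filter_upwards [hA3 t (Finset.mem_Ico.1 ht).1] with ω hω
    rw [hupdate t ω] at hω ⊢
    simpa only [(hOmin t ω).1.norm_eq_sqrt] using
      sub_le_norm_mul_of_le_add_inner (hη t).le hω
  have htelescope := Finset.sub_le_sum_Ico_of_sub_succ_le (Nat.le_add_left t₂ T) hdescent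
  rw [← Finset.mul_sum] at htelescope
  have hsum_nonneg : 0 ≤ ∑ t ∈ Finset.Ico t₂ (T + t₂), η t * ∫ ω, ‖gradient f (W t ω)‖ ∂μ :=
    Finset.sum_nonneg fun t _ => mul_nonneg (hη t).le (integral_nonneg fun _ => norm_nonneg _)
  have hC₆_le : C₆ ≤ ∑ t ∈ Finset.Ico t₂ (T + t₂), η t * ∫ ω, ‖gradient f (W t ω)‖ ∂μ :=
    calc C₆ ≤ (√n)⁻¹ * (∫ ω, f (W t₂ ω) ∂μ - ∫ ω, f (W (T + t₂) ω) ∂μ) :=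
          hC₆ (T + t₂) (Nat.le_add_left t₂ T)
      _ ≤ (√n)⁻¹ * (√n * ∑ t ∈ Finset.Ico t₂ (T + t₂), η t * ∫ ω, ‖gradient f (W t ω)‖ ∂μ) :=
          mul_le_mul_of_nonneg_left htelescope (inv_nonneg.2 (Real.sqrt_nonneg _))
      _ ≤ _ := inv_mul_mul_le_self hsum_nonneg
  rw [div_eq_inv_mul]
  exact mul_le_mul_of_nonneg_left hC₆_le
    (inv_nonneg.2 (Finset.sum_nonneg fun t _ => (hη t).le))

/-- **Lower convergence bound for Muon with momentum** (Theorem 5.3). Under the local convexity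
assumption (A3) along the iterates from time `t₂` on, and (A4) `C₆ ≥ 0` being a lower bound of
`(1/√n)(E[f(W_{t₂})] − E[f(W_t)])` for `t ≥ t₂`, the weighted Cesàro mean of `E[‖∇f(W_t)‖_F]`
is at least `C₆ / Σ_{t=t₂}^{T+t₂−1} η_t`. -/
theorem muon_momentum_lower_convergence_bound
    {m n N : ℕ} (hN : 0 < N) (hnm : n ≤ m)
    {Ω : Type*} {mΩ : MeasurableSpace Ω} (μ : Measure Ω) [IsProbabilityMeasure μ]
    (ℱ : Filtration ℕ mΩ)
    (fi : Fin N → EuclideanSpace ℝ (Fin m × Fin n) → ℝ)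
    (Li : Fin N → ℝ) (ν 𝔭 σ : ℝ)
    (hLi : ∀ i, 0 < Li i)
    (hν : ν ∈ Set.Ioc (0 : ℝ) 1) (h𝔭 : 𝔭 ∈ Set.Ioc (1 : ℝ) 2) (hσ : 0 ≤ σ)
    -- (A1): Hölder smoothness and finite infima
    (hdiff : ∀ i, Differentiable ℝ (fi i))
    (hholder : ∀ i, ∀ W₁ W₂ : EuclideanSpace ℝ (Fin m × Fin n),
      ‖gradient (fi i) W₁ - gradient (fi i) W₂‖ ≤ Li i * ‖W₁ - W₂‖ ^ ν)
    (hbdd : ∀ i, BddBelow (Set.range (fi i)))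
    -- empirical risk
    (f : EuclideanSpace ℝ (Fin m × Fin n) → ℝ)
    (hf : ∀ V, f V = (N : ℝ)⁻¹ * ∑ i, fi i V)
    -- Muon with momentum β ∈ [0,1)
    (β : ℝ) (hβ : β ∈ Set.Ico (0 : ℝ) 1)
    (η : ℕ → ℝ) (hη : ∀ t, 0 < η t)
    (b : ℕ → ℕ) (hb : ∀ t, 0 < b t)
    (W g M O : ℕ → Ω → EuclideanSpace ℝ (Fin m × Fin n))
    (Mneg : Ω → EuclideanSpace ℝ (Fin m × Fin n))
    -- momentum recursion M_t = β M_{t−1} + (1−β) ∇f_{ξ_t}(W_t)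
    (hM0 : ∀ ω, M 0 ω = β • Mneg ω + (1 - β) • g 0 ω)
    (hMrec : ∀ t ω, M (t + 1) ω = β • M t ω + (1 - β) • g (t + 1) ω)
    -- O t is a minimizer of ‖O − M_t‖_F over the Stiefel manifold
    (hOmin : ∀ t ω, IsStiefel (O t ω) ∧
      ∀ A : EuclideanSpace ℝ (Fin m × Fin n), IsStiefel A → ‖O t ω - M t ω‖ ≤ ‖A - M t ω‖)
    (hupdate : ∀ t ω, W (t + 1) ω = W t ω - η t • O t ω)
    (hWmeas : ∀ t, StronglyMeasurable[ℱ t] (W t))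
    (hgmeas : ∀ t, StronglyMeasurable[ℱ (t + 1)] (g t))
    (hOmeas : ∀ t, StronglyMeasurable[ℱ (t + 1)] (O t))
    (hgint : ∀ t, Integrable (g t) μ)
    -- (A2)(i): conditional unbiasedness of the mini-batch gradient
    (hunbiased : ∀ t, μ[g t | ℱ t] =ᵐ[μ] fun ω => gradient f (W t ω))
    -- (A2)(ii): conditional 𝔭-variance bound of the mini-batch gradient (Proposition 1)
    (hpvar : ∀ t, ∀ᵐ ω ∂μ,
      (μ[fun ω' => ‖g t ω' - gradient f (W t ω')‖ ^ 𝔭 | ℱ t]) ω ≤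
        2 ^ (2 - 𝔭) * σ ^ 𝔭 / (b t : ℝ) ^ (𝔭 - 1))
    (hinnerint : ∀ t, Integrable (fun ω => ⟪gradient f (W t ω), O t ω⟫_ℝ) μ)
    (hfint : ∀ t, Integrable (fun ω => f (W t ω)) μ)
    (hgradnint : ∀ t, Integrable (fun ω => ‖gradient f (W t ω)‖) μ)
    -- (A3): convexity along the iterates after time t₂
    (t₂ : ℕ)
    (hA3 : ∀ t, t₂ ≤ t → ∀ᵐ ω ∂μ,
      f (W t ω) + ⟪gradient f (W t ω), W (t + 1) ω - W t ω⟫_ℝ ≤ f (W (t + 1) ω))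
    -- (A4): C₆ ≥ 0 is a lower bound of (1/√n)(E[f(W_{t₂})] − E[f(W_t)]) for t ≥ t₂
    (C₆ : ℝ) (hC₆pos : 0 ≤ C₆)
    (hC₆ : ∀ t, t₂ ≤ t →
      C₆ ≤ (Real.sqrt n)⁻¹ * ((∫ ω, f (W t₂ ω) ∂μ) - ∫ ω, f (W t ω) ∂μ)) :
    ∀ T : ℕ,
      C₆ / (∑ t ∈ Finset.Ico t₂ (T + t₂), η t) ≤
        (∑ t ∈ Finset.Ico t₂ (T + t₂), η t)⁻¹ *
          ∑ t ∈ Finset.Ico t₂ (T + t₂), η t * (∫ ω, ‖gradient f (W t ω)‖ ∂μ) :=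
  muon_momentum_lower_convergence_bound_general (mΩ := mΩ) μ f η hη W M O hOmin hupdate hfint
    hgradnint t₂ hA3 C₆ hC₆
end
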